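/- arXiv:2101.02027 — 3 statements merged into one kernel-verified Lean document; each statement's English description precedes it below -/
import Mathlib

section
/- For all real x with |x| < 1, (arcsin x)²/√(1−x²) = 2·∑_{n=0}^{∞} ((2n+1)!!)² · (∑_{k=0}^{n} 1/(2k+1)²) · x^(2n+2)/(2n+2)!. -/
open FormalMultilinearSeries
open scoped Nat

noncomputable section
namespace A16




/-- summability helper -/
lemma summable_sq_geom {r : ℝ} (hr : 0 ≤ r) (hr1 : r < 1) :
    Summable (fun n : ℕ => ((n : ℝ) + 1) ^ 2 * r ^ n) := by
  have h : ‖r‖ < 1 := by rwa [Real.norm_eq_abs, abs_of_nonneg hr]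
  have h2 := summable_pow_mul_geometric_of_norm_lt_one (R := ℝ) 2 h
  have h1 := summable_pow_mul_geometric_of_norm_lt_one (R := ℝ) 1 h
  have h0 := (summable_geometric_of_norm_lt_one h : Summable fun n : ℕ => r ^ n)
  have := (h2.add ((h1.mul_left 2).add h0))
  apply this.congr
  intro n
  ring

lemma radius_ge_one (c : ℕ → ℝ) (C : ℝ)
    (hb : ∀ n, |c n| ≤ C * ((n : ℝ) + 1) ^ 2) :
    1 ≤ (ofScalars ℝ c).radius := by
  apply ENNReal.le_of_forall_nnreal_lt
  intro r hr
  have hr1 : (r : ℝ) < 1 := by exact_mod_cast hr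
  apply FormalMultilinearSeries.le_radius_of_summable_norm
  have hsum : Summable (fun n : ℕ => C * (((n : ℝ) + 1) ^ 2 * (r : ℝ) ^ n)) :=
    (summable_sq_geom r.coe_nonneg hr1).mul_left C
  apply Summable.of_nonneg_of_le (fun n => ?_) (fun n => ?_) hsum
  · positivity
  · rw [ofScalars_norm, Real.norm_eq_abs]
    rw [← mul_assoc]
    apply mul_le_mul_of_nonneg_right _ (by positivity)
    exact hb n

lemma mem_ball_radius {c : ℕ → ℝ} (h1 : 1 ≤ (ofScalars ℝ c).radius) {x : ℝ} (hx : |x| < 1) :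
    x ∈ Metric.eball (0 : ℝ) (ofScalars ℝ c).radius := by
  rw [Metric.mem_eball, edist_zero_right]
  refine lt_of_lt_of_le ?_ h1
  rw [enorm_eq_nnnorm, ← ENNReal.coe_one, ENNReal.coe_lt_coe, ← NNReal.coe_lt_coe]
  simpa [Real.norm_eq_abs] using hx

lemma hasSum_ofScalars (c : ℕ → ℝ) (h1 : 1 ≤ (ofScalars ℝ c).radius) {x : ℝ} (hx : |x| < 1) :
    HasSum (fun n => c n * x ^ n) (ofScalarsSum c x) := by
  have hp := (ofScalars ℝ c).hasFPowerSeriesOnBall (lt_of_lt_of_le one_pos h1)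
  have := hp.hasSum (mem_ball_radius h1 hx)
  simp only [zero_add] at this
  have e : (fun n => (ofScalars ℝ c n) fun _ => x) = fun n => c n * x ^ n := by
    funext n
    rw [ofScalars_apply_eq, smul_eq_mul]
  rw [e] at this
  exact this


lemma derivSeries_apply_one (c : ℕ → ℝ) (n : ℕ) (x : ℝ) :
    ((ofScalars ℝ c).derivSeries n (fun _ => x)) 1 = ((n : ℝ) + 1) * c (n + 1) * x ^ n := by
  rcases eq_or_ne x 0 with rfl | hx
  · rcases Nat.eq_zero_or_pos n with rfl | hn
    · have h0 : (fun _ : Fin 0 => (0 : ℝ)) = (fun _ : Fin 0 => (1 : ℝ)) := by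
        funext i; exact absurd i.2 (by simp)
      rw [h0]
      have hd := (ofScalars ℝ c).derivSeries_apply_diag 0 (1 : ℝ)
      rw [hd, ofScalars_apply_eq]
      simp
    · obtain ⟨m, rfl⟩ := Nat.exists_eq_succ_of_ne_zero hn.ne'
      have hz : ((ofScalars ℝ c).derivSeries (m + 1)) (fun _ : Fin (m + 1) => (0 : ℝ)) = 0 :=
        ContinuousMultilinearMap.map_coord_zero _ (0 : Fin (m + 1)) rfl
      rw [hz]
      simp [pow_succ]
  · have hd := (ofScalars ℝ c).derivSeries_apply_diag n x
    rw [ofScalars_apply_eq] at hd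
    have hl : ((ofScalars ℝ c).derivSeries n (fun _ => x)) x
        = x * ((ofScalars ℝ c).derivSeries n (fun _ => x)) 1 := by
      have := ((ofScalars ℝ c).derivSeries n (fun _ => x)).map_smul x (1 : ℝ)
      simpa [smul_eq_mul] using this
    rw [hl] at hd
    refine mul_left_cancel₀ hx ?_
    rw [hd, nsmul_eq_mul, smul_eq_mul]
    push_cast
    ring

lemma hasDerivAt_ofScalarsSum (c : ℕ → ℝ) (h1 : 1 ≤ (ofScalars ℝ c).radius)
    {x y : ℝ} (hx : |x| < 1)
    (hy : HasSum (fun n : ℕ => ((n : ℝ) + 1) * c (n + 1) * x ^ n) y) :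
    HasDerivAt (ofScalarsSum c) y x := by
  set p := ofScalars ℝ c with hp
  have hball := p.hasFPowerSeriesOnBall (lt_of_lt_of_le one_pos h1)
  have hmem := mem_ball_radius h1 hx
  have hmem' : x ∈ Metric.eball (0 : ℝ) p.radius := by simpa using hmem
  have hda : DifferentiableAt ℝ p.sum x := by
    have := hball.analyticAt_of_mem hmem'
    exact this.differentiableAt
  have hfd := hball.fderiv
  have hsum := hfd.hasSum hmem'
  simp only [zero_add] at hsum
  have hsum2 := (ContinuousLinearMap.apply ℝ ℝ (1 : ℝ)).hasSum hsum
  have hterm : (fun n => (ContinuousLinearMap.apply ℝ ℝ (1 : ℝ)) (p.derivSeries n fun _ => x))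
      = fun n : ℕ => ((n : ℝ) + 1) * c (n + 1) * x ^ n := by
    funext n
    exact derivSeries_apply_one c n x
  rw [hterm] at hsum2
  have hval : y = (fderiv ℝ p.sum x) 1 := hy.unique hsum2
  have := hda.hasDerivAt
  rwa [← fderiv_apply_one_eq_deriv, ← hval] at this


def vSeq (n : ℕ) : ℝ := ((2 * n - 1)‼ : ℝ) / ((2 * n)‼ : ℝ)
def sSum (n : ℕ) : ℝ := ∑ k ∈ Finset.range (n + 1), 1 / (2 * (k : ℝ) + 1) ^ 2
def aSeq (n : ℕ) : ℝ := 2 * ((2 * n + 1)‼ : ℝ) ^ 2 * sSum n / ((2 * n + 2)! : ℝ)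
def vC (m : ℕ) : ℝ := if Even m then vSeq (m / 2) else 0
def cC (m : ℕ) : ℝ := if Even m then 0 else vSeq (m / 2) / m
def aC (m : ℕ) : ℝ := if m = 0 then 0 else if Even m then aSeq (m / 2 - 1) else 0

lemma dfac_pos (n : ℕ) : (0 : ℝ) < (n‼ : ℝ) := by
  exact_mod_cast Nat.doubleFactorial_pos n

lemma dfac_le : ∀ n : ℕ, (n‼ : ℕ) ≤ (n + 1)‼ := by
  intro n
  induction n using Nat.strong_induction_on with
  | _ n ih =>
    match n with
    | 0 => simp [Nat.doubleFactorial]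
    | 1 => simp [Nat.doubleFactorial]
    | (m + 2) =>
      rw [Nat.doubleFactorial_add_two, show m + 2 + 1 = m + 1 + 2 from rfl,
        Nat.doubleFactorial_add_two]
      exact Nat.mul_le_mul (by omega) (ih m (by omega))

lemma vSeq_pos (n : ℕ) : 0 < vSeq n := div_pos (dfac_pos _) (dfac_pos _)

lemma vSeq_le_one (n : ℕ) : vSeq n ≤ 1 := by
  rw [vSeq, div_le_one (dfac_pos _)]
  rcases Nat.eq_zero_or_pos n with rfl | hn
  · norm_num
  · have h : 2 * n - 1 + 1 = 2 * n := by omega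
    have := dfac_le (2 * n - 1)
    rw [h] at this
    exact_mod_cast this

lemma vSeq_rec (j : ℕ) : (2 * (j : ℝ) + 2) * vSeq (j + 1) = (2 * j + 1) * vSeq j := by
  have h1 : (2 * (j + 1) - 1)‼ = (2 * j + 1) * (2 * j - 1)‼ := by
    rw [show 2 * (j + 1) - 1 = 2 * j + 1 from by omega, Nat.doubleFactorial_add_one]
  have h2 : (2 * (j + 1))‼ = (2 * j + 2) * (2 * j)‼ := by
    rw [show 2 * (j + 1) = 2 * j + 2 from by ring, Nat.doubleFactorial_add_two]
  unfold vSeq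
  rw [h1, h2]
  have d1 := dfac_pos (2 * j - 1)
  have d2 := dfac_pos (2 * j)
  push_cast
  field_simp


lemma fact_pos' (n : ℕ) : (0 : ℝ) < ((n)! : ℝ) := by exact_mod_cast Nat.factorial_pos n

lemma hEF (j : ℕ) : (((2 * j + 2)! : ℕ) : ℝ) = ((2 * j + 2)‼ : ℝ) * ((2 * j + 1)‼ : ℝ) := by
  have := Nat.factorial_eq_mul_doubleFactorial (2 * j + 1)
  rw [show 2 * j + 1 + 1 = 2 * j + 2 from rfl] at this
  exact_mod_cast this

lemma hvSucc (j : ℕ) : vSeq (j + 1) = ((2 * j + 1)‼ : ℝ) / ((2 * j + 2)‼ : ℝ) := by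
  rw [vSeq, show 2 * (j + 1) - 1 = 2 * j + 1 from by omega,
    show 2 * (j + 1) = 2 * j + 2 from by ring]

lemma sSum_succ (j : ℕ) : sSum (j + 1) = sSum j + 1 / (2 * (j : ℝ) + 3) ^ 2 := by
  rw [sSum, Finset.sum_range_succ]
  push_cast
  rw [sSum]
  congr 1
  ring

lemma aSeq_rec (j : ℕ) : (2 * (j : ℝ) + 4) * aSeq (j + 1)
    = (2 * (j : ℝ) + 3) * aSeq j + 2 * vSeq (j + 1) / (2 * (j : ℝ) + 3) := by
  have hD : ((2 * (j + 1) + 1)‼ : ℝ) = (2 * (j : ℝ) + 3) * ((2 * j + 1)‼ : ℝ) := by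
    rw [show 2 * (j + 1) + 1 = 2 * j + 1 + 2 from by ring, Nat.doubleFactorial_add_two]
    push_cast
    ring
  have hF : (((2 * (j + 1) + 2)! : ℕ) : ℝ)
      = (2 * (j : ℝ) + 4) * ((2 * (j : ℝ) + 3) * ((2 * j + 2)! : ℝ)) := by
    rw [show 2 * (j + 1) + 2 = (2 * j + 3) + 1 from by ring, Nat.factorial_succ,
      show 2 * j + 3 = (2 * j + 2) + 1 from by ring, Nat.factorial_succ]
    push_cast
    ring
  have d1 := dfac_pos (2 * j + 1)
  have d2 := dfac_pos (2 * j + 2)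
  have h3 : (2 * (j : ℝ) + 3) ≠ 0 := by positivity
  have h4 : (2 * (j : ℝ) + 4) ≠ 0 := by positivity
  rw [aSeq, aSeq, hD, hF, hvSucc, sSum_succ, hEF]
  field_simp

lemma sSum_nonneg (n : ℕ) : 0 ≤ sSum n := by
  apply Finset.sum_nonneg
  intro k _
  positivity

lemma sSum_le (n : ℕ) : sSum n ≤ (n : ℝ) + 1 := by
  have : ∀ k ∈ Finset.range (n + 1), 1 / (2 * (k : ℝ) + 1) ^ 2 ≤ 1 := by
    intro k _
    rw [div_le_one (by positivity)]
    nlinarith [Nat.cast_nonneg (α := ℝ) k]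
  calc sSum n ≤ ∑ _k ∈ Finset.range (n + 1), (1 : ℝ) := Finset.sum_le_sum this
  _ = (n : ℝ) + 1 := by simp
  
lemma aSeq_nonneg (n : ℕ) : 0 ≤ aSeq n := by
  have := sSum_nonneg n
  have := fact_pos' (2 * n + 2)
  have := dfac_pos (2 * n + 1)
  rw [aSeq]
  positivity

lemma aSeq_le (n : ℕ) : aSeq n ≤ 2 * ((n : ℝ) + 1) := by
  have d1 := dfac_pos (2 * n + 1)
  have d2 := dfac_pos (2 * n + 2)
  have hle : ((2 * n + 1)‼ : ℝ) ≤ ((2 * n + 2)‼ : ℝ) := by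
    exact_mod_cast dfac_le (2 * n + 1)
  have hS := sSum_nonneg n
  have key : aSeq n = ((2 * n + 1)‼ : ℝ) / ((2 * n + 2)‼ : ℝ) * (2 * sSum n) := by
    rw [aSeq, hEF]
    field_simp
  rw [key]
  calc ((2 * n + 1)‼ : ℝ) / ((2 * n + 2)‼ : ℝ) * (2 * sSum n)
      ≤ 1 * (2 * sSum n) := by
        apply mul_le_mul_of_nonneg_right _ (by positivity)
        rw [div_le_one d2]
        exact hle
  _ ≤ 1 * (2 * ((n : ℝ) + 1)) := by
        have := sSum_le n
        nlinarith
  _ = 2 * ((n : ℝ) + 1) := by ring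


def vCd (m : ℕ) : ℝ := ((m : ℝ) + 1) * vC (m + 1)
def aCd (m : ℕ) : ℝ := ((m : ℝ) + 1) * aC (m + 1)

lemma not_even_odd (j : ℕ) : ¬ Even (2 * j + 1) := by
  rw [Nat.even_iff]; omega

lemma even_2j (j : ℕ) : Even (2 * j) := ⟨j, by ring⟩

lemma vC_even (j : ℕ) : vC (2 * j) = vSeq j := by
  rw [vC, if_pos (even_2j j), Nat.mul_div_cancel_left j (by norm_num)]

lemma vC_odd (j : ℕ) : vC (2 * j + 1) = 0 := by
  rw [vC, if_neg (not_even_odd j)]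

lemma cC_even (j : ℕ) : cC (2 * j) = 0 := by
  rw [cC, if_pos (even_2j j)]

lemma cC_odd (j : ℕ) : cC (2 * j + 1) = vSeq j / (2 * (j : ℝ) + 1) := by
  rw [cC, if_neg (not_even_odd j), show (2 * j + 1) / 2 = j from by omega]
  push_cast
  ring_nf

lemma aC_zero : aC 0 = 0 := by rw [aC, if_pos rfl]

lemma aC_even (j : ℕ) : aC (2 * j + 2) = aSeq j := by
  rw [aC, if_neg (by omega), if_pos (by exact ⟨j + 1, by ring⟩),
    show (2 * j + 2) / 2 - 1 = j from by omega]

lemma aC_odd (j : ℕ) : aC (2 * j + 1) = 0 := by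
  rw [aC, if_neg (by omega), if_neg (not_even_odd j)]

lemma abs_vC_le (m : ℕ) : |vC m| ≤ 1 := by
  rw [vC]
  split
  · rw [abs_of_pos (vSeq_pos _)]
    exact vSeq_le_one _
  · simp

lemma abs_cC_le (m : ℕ) : |cC m| ≤ 1 := by
  rw [cC]
  split
  · simp
  · rename_i h
    have hm : 1 ≤ m := by
      rcases Nat.eq_zero_or_pos m with rfl | h1
      · exact absurd (by simp) h
      · exact h1
    have hm' : (1 : ℝ) ≤ (m : ℝ) := by exact_mod_cast hm
    rw [abs_of_pos (div_pos (vSeq_pos _) (by linarith))]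
    rw [div_le_one (by linarith)]
    exact (vSeq_le_one _).trans hm'

lemma abs_aC_le (m : ℕ) : |aC m| ≤ 2 * ((m : ℝ) + 1) := by
  have hm : (0:ℝ) ≤ (m : ℝ) := Nat.cast_nonneg m
  rw [aC]
  split
  · simp; linarith
  split
  · rw [abs_of_nonneg (aSeq_nonneg _)]
    refine (aSeq_le _).trans ?_
    have : ((m / 2 - 1 : ℕ) : ℝ) ≤ (m : ℝ) := by exact_mod_cast Nat.le_of_lt_succ (by omega)
    linarith
  · simp; linarith

lemma hb_vC : ∀ m, |vC m| ≤ 1 * ((m : ℝ) + 1) ^ 2 := by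
  intro m
  have hm : (0:ℝ) ≤ (m : ℝ) := Nat.cast_nonneg m
  have := abs_vC_le m
  nlinarith

lemma hb_cC : ∀ m, |cC m| ≤ 1 * ((m : ℝ) + 1) ^ 2 := by
  intro m
  have hm : (0:ℝ) ≤ (m : ℝ) := Nat.cast_nonneg m
  have := abs_cC_le m
  nlinarith

lemma hb_aC : ∀ m, |aC m| ≤ 2 * ((m : ℝ) + 1) ^ 2 := by
  intro m
  have hm : (0:ℝ) ≤ (m : ℝ) := Nat.cast_nonneg m
  have := abs_aC_le m
  nlinarith

lemma hb_vCd : ∀ m, |vCd m| ≤ 1 * ((m : ℝ) + 1) ^ 2 := by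
  intro m
  have hm : (0:ℝ) ≤ (m : ℝ) := Nat.cast_nonneg m
  have h := abs_vC_le (m + 1)
  rw [vCd, abs_mul, abs_of_nonneg (by linarith : (0:ℝ) ≤ (m : ℝ) + 1)]
  nlinarith [abs_nonneg (vC (m+1))]

lemma hb_aCd : ∀ m, |aCd m| ≤ 6 * ((m : ℝ) + 1) ^ 2 := by
  intro m
  have hm : (0:ℝ) ≤ (m : ℝ) := Nat.cast_nonneg m
  have h := abs_aC_le (m + 1)
  rw [aCd, abs_mul, abs_of_nonneg (by linarith : (0:ℝ) ≤ (m : ℝ) + 1)]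
  have : ((m + 1 : ℕ) : ℝ) = (m : ℝ) + 1 := by push_cast; ring
  rw [this] at h
  nlinarith [abs_nonneg (aC (m+1))]

lemma rad_vC : 1 ≤ (ofScalars ℝ vC).radius := radius_ge_one vC 1 hb_vC
lemma rad_cC : 1 ≤ (ofScalars ℝ cC).radius := radius_ge_one cC 1 hb_cC
lemma rad_aC : 1 ≤ (ofScalars ℝ aC).radius := radius_ge_one aC 2 hb_aC
lemma rad_vCd : 1 ≤ (ofScalars ℝ vCd).radius := radius_ge_one vCd 1 hb_vCd
lemma rad_aCd : 1 ≤ (ofScalars ℝ aCd).radius := radius_ge_one aCd 6 hb_aCd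

lemma vSeq_zero : vSeq 0 = 1 := by norm_num [vSeq, Nat.doubleFactorial]

lemma vSeq_one : vSeq 1 = 1 / 2 := by norm_num [vSeq, Nat.doubleFactorial]

lemma aSeq_zero : aSeq 0 = 1 := by norm_num [aSeq, sSum, Nat.doubleFactorial, Nat.factorial]

/-- Combination: for any coefficient pair (c, RHS r), if the telescoped coefficients match,
the ODE-type combination holds. We do it concretely for vC and aC. -/
lemma EV {x : ℝ} (hx : |x| < 1) :
    (1 - x ^ 2) * ofScalarsSum vCd x - x * ofScalarsSum vC x = 0 := by
  have hV1 : HasSum (fun m : ℕ => vCd m * x ^ m) (ofScalarsSum vCd x) :=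
    hasSum_ofScalars vCd rad_vCd hx
  have hV : HasSum (fun m : ℕ => vC m * x ^ m) (ofScalarsSum vC x) :=
    hasSum_ofScalars vC rad_vC hx
  set u : ℕ → ℝ := fun m => match m with
    | 0 => 0 | 1 => 0 | (n + 2) => x ^ 2 * (vCd n * x ^ n) with hu_def
  set w : ℕ → ℝ := fun m => match m with
    | 0 => 0 | (n + 1) => x * (vC n * x ^ n) with hw_def
  have hu : HasSum u (x ^ 2 * ofScalarsSum vCd x) := by
    have h2 : HasSum (fun n : ℕ => u (n + 2)) (x ^ 2 * ofScalarsSum vCd x) :=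
      hV1.mul_left (x ^ 2)
    have h3 := (hasSum_nat_add_iff (f := u) 2).mp h2
    have hu0 : u 0 = 0 := rfl
    have hu1 : u 1 = 0 := rfl
    simpa [Finset.sum_range_succ, hu0, hu1] using h3
  have hw : HasSum w (x * ofScalarsSum vC x) := by
    have h1 : HasSum (fun n : ℕ => w (n + 1)) (x * ofScalarsSum vC x) :=
      hV.mul_left x
    have h3 := (hasSum_nat_add_iff (f := w) 1).mp h1
    have hw0 : w 0 = 0 := rfl
    simpa [hw0] using h3
  have total := hV1.sub (hu.add hw)
  have key : ∀ m : ℕ, vCd m * x ^ m - (u m + w m) = 0 := by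
    intro m
    match m with
    | 0 =>
      show vCd 0 * x ^ 0 - (0 + 0) = 0
      have : vC 1 = 0 := vC_odd 0
      simp [vCd, this]
    | 1 =>
      show vCd 1 * x ^ 1 - (0 + x * (vC 0 * x ^ 0)) = 0
      have h2 : vC 2 = vSeq 1 := by simpa using vC_even 1
      have h0 : vC 0 = vSeq 0 := by simpa using vC_even 0
      rw [vCd]
      norm_num [h2, h0, vSeq_one, vSeq_zero]
    | (n + 2) =>
      show vCd (n + 2) * x ^ (n + 2) - (x ^ 2 * (vCd n * x ^ n) + x * (vC (n + 1) * x ^ (n + 1))) = 0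
      rcases Nat.even_or_odd n with he | ho
      · obtain ⟨j, hj⟩ := he
        have hj' : n = 2 * j := by omega
        subst hj'
        have e1 : vC (2 * j + 2 + 1) = 0 := by
          have := vC_odd (j + 1)
          rw [show 2 * (j + 1) + 1 = 2 * j + 2 + 1 from by ring] at this
          exact this
        have e2 : vC (2 * j + 1) = 0 := vC_odd j
        rw [vCd, vCd]
        rw [show 2 * j + 2 + 1 = 2 * (j + 1) + 1 from by ring, vC_odd (j + 1), e2]
        ring
      · obtain ⟨j, hj⟩ := ho
        subst hj
        have e1 : vC (2 * j + 1 + 2 + 1) = vSeq (j + 2) := by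
          rw [show 2 * j + 1 + 2 + 1 = 2 * (j + 2) from by ring, vC_even]
        have e2 : vC (2 * j + 1 + 1) = vSeq (j + 1) := by
          rw [show 2 * j + 1 + 1 = 2 * (j + 1) from by ring, vC_even]
        rw [vCd, vCd, e1, e2]
        have hrec := vSeq_rec (j + 1)
        rw [show j + 1 + 1 = j + 2 from rfl] at hrec
        push_cast at hrec ⊢
        linear_combination (x ^ (2 * j + 1 + 2)) * hrec
  have hfun : (fun m : ℕ => vCd m * x ^ m - (u m + w m)) = fun _ => (0 : ℝ) := funext key
  rw [hfun] at total
  have := total.unique hasSum_zero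
  linarith [this]

lemma E2 {x : ℝ} (hx : |x| < 1) :
    (1 - x ^ 2) * ofScalarsSum aCd x - x * ofScalarsSum aC x = 2 * ofScalarsSum cC x := by
  have hY1 : HasSum (fun m : ℕ => aCd m * x ^ m) (ofScalarsSum aCd x) :=
    hasSum_ofScalars aCd rad_aCd hx
  have hY : HasSum (fun m : ℕ => aC m * x ^ m) (ofScalarsSum aC x) :=
    hasSum_ofScalars aC rad_aC hx
  have hU : HasSum (fun m : ℕ => cC m * x ^ m) (ofScalarsSum cC x) :=
    hasSum_ofScalars cC rad_cC hx
  set u : ℕ → ℝ := fun m => match m with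
    | 0 => 0 | 1 => 0 | (n + 2) => x ^ 2 * (aCd n * x ^ n) with hu_def
  set w : ℕ → ℝ := fun m => match m with
    | 0 => 0 | (n + 1) => x * (aC n * x ^ n) with hw_def
  have hu : HasSum u (x ^ 2 * ofScalarsSum aCd x) := by
    have h2 : HasSum (fun n : ℕ => u (n + 2)) (x ^ 2 * ofScalarsSum aCd x) :=
      hY1.mul_left (x ^ 2)
    have h3 := (hasSum_nat_add_iff (f := u) 2).mp h2
    have hu0 : u 0 = 0 := rfl
    have hu1 : u 1 = 0 := rfl
    simpa [Finset.sum_range_succ, hu0, hu1] using h3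
  have hw : HasSum w (x * ofScalarsSum aC x) := by
    have h1 : HasSum (fun n : ℕ => w (n + 1)) (x * ofScalarsSum aC x) :=
      hY.mul_left x
    have h3 := (hasSum_nat_add_iff (f := w) 1).mp h1
    have hw0 : w 0 = 0 := rfl
    simpa [hw0] using h3
  have total := hY1.sub (hu.add hw)
  have key : ∀ m : ℕ, aCd m * x ^ m - (u m + w m) = 2 * (cC m * x ^ m) := by
    intro m
    match m with
    | 0 =>
      show aCd 0 * x ^ 0 - (0 + 0) = 2 * (cC 0 * x ^ 0)
      have h1 : aC 1 = 0 := by simpa using aC_odd 0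
      have h0 : cC 0 = 0 := by simpa using cC_even 0
      simp [aCd, h1, h0]
    | 1 =>
      show aCd 1 * x ^ 1 - (0 + x * (aC 0 * x ^ 0)) = 2 * (cC 1 * x ^ 1)
      have h2 : aC 2 = aSeq 0 := by simpa using aC_even 0
      have h1 : cC 1 = vSeq 0 / 1 := by simpa using cC_odd 0
      rw [aCd]
      norm_num [h2, h1, aC_zero, aSeq_zero, vSeq_zero]
    | (n + 2) =>
      show aCd (n + 2) * x ^ (n + 2) - (x ^ 2 * (aCd n * x ^ n) + x * (aC (n + 1) * x ^ (n + 1)))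
        = 2 * (cC (n + 2) * x ^ (n + 2))
      rcases Nat.even_or_odd n with he | ho
      · obtain ⟨j, hj⟩ := he
        have hj' : n = 2 * j := by omega
        subst hj'
        rw [aCd, aCd]
        rw [show 2 * j + 2 + 1 = 2 * (j + 1) + 1 from by ring, aC_odd (j + 1), aC_odd j,
          show 2 * j + 2 = 2 * (j + 1) from by ring, cC_even (j + 1)]
        ring
      · obtain ⟨j, hj⟩ := ho
        subst hj
        have e1 : aC (2 * j + 1 + 2 + 1) = aSeq (j + 1) := by
          rw [show 2 * j + 1 + 2 + 1 = 2 * (j + 1) + 2 from by ring, aC_even]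
        have e2 : aC (2 * j + 1 + 1) = aSeq j := by
          rw [show 2 * j + 1 + 1 = 2 * j + 2 from by ring, aC_even]
        have e3 : cC (2 * j + 1 + 2) = vSeq (j + 1) / (2 * (j : ℝ) + 3) := by
          rw [show 2 * j + 1 + 2 = 2 * (j + 1) + 1 from by ring, cC_odd]
          norm_num
          ring_nf
        rw [aCd, aCd, e1, e2, e3]
        have hrec := aSeq_rec j
        have h3 : (2 * (j : ℝ) + 3) ≠ 0 := by positivity
        push_cast at hrec ⊢
        linear_combination (x ^ (2 * j + 1 + 2)) * hrec
  have hfun : (fun m : ℕ => aCd m * x ^ m - (u m + w m))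
      = fun m : ℕ => 2 * (cC m * x ^ m) := funext key
  rw [hfun] at total
  have := total.unique (hU.mul_left 2)
  linarith [this]

lemma const_on_Ioo {f : ℝ → ℝ} (hf : ∀ y ∈ Set.Ioo (-1 : ℝ) 1, HasDerivAt f 0 y)
    {x : ℝ} (hx : x ∈ Set.Ioo (-1 : ℝ) 1) : f x = f 0 := by
  apply Convex.is_const_of_fderivWithin_eq_zero (convex_Ioo (-1 : ℝ) 1)
    (fun y hy => ((hf y hy).differentiableAt).differentiableWithinAt)
    (fun y hy => ?_) hx ⟨by norm_num, by norm_num⟩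
  rw [fderivWithin_of_isOpen isOpen_Ioo hy]
  have h2 := ((hf y hy).hasFDerivAt).fderiv
  rw [h2]
  ext
  simp

lemma one_sub_sq_pos {x : ℝ} (hx : x ∈ Set.Ioo (-1 : ℝ) 1) : 0 < 1 - x ^ 2 := by
  obtain ⟨h1, h2⟩ := hx
  nlinarith

lemma sqrt_pos' {x : ℝ} (hx : x ∈ Set.Ioo (-1 : ℝ) 1) : 0 < Real.sqrt (1 - x ^ 2) :=
  Real.sqrt_pos.mpr (one_sub_sq_pos hx)

lemma sq_sqrt' {x : ℝ} (hx : x ∈ Set.Ioo (-1 : ℝ) 1) :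
    Real.sqrt (1 - x ^ 2) ^ 2 = 1 - x ^ 2 :=
  Real.sq_sqrt (one_sub_sq_pos hx).le

lemma abs_lt_of_mem {x : ℝ} (hx : x ∈ Set.Ioo (-1 : ℝ) 1) : |x| < 1 :=
  abs_lt.mpr ⟨hx.1, hx.2⟩

lemma hasDerivAt_sqrt_one_sub_sq {x : ℝ} (hx : x ∈ Set.Ioo (-1 : ℝ) 1) :
    HasDerivAt (fun y => Real.sqrt (1 - y ^ 2)) (-x / Real.sqrt (1 - x ^ 2)) x := by
  have h1 : HasDerivAt (fun y : ℝ => 1 - y ^ 2) (-(2 * x)) x := by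
    simpa using ((hasDerivAt_pow 2 x).const_sub 1)
  have h2 := h1.sqrt (ne_of_gt (one_sub_sq_pos hx))
  convert h2 using 1
  have := sqrt_pos' hx
  field_simp

lemma hasDerivAt_V {x : ℝ} (hx : x ∈ Set.Ioo (-1 : ℝ) 1) :
    HasDerivAt (ofScalarsSum vC) (ofScalarsSum vCd x) x := by
  refine hasDerivAt_ofScalarsSum vC rad_vC (abs_lt_of_mem hx) ?_
  have := hasSum_ofScalars vCd rad_vCd (abs_lt_of_mem hx)
  exact this

lemma hasDerivAt_Y {x : ℝ} (hx : x ∈ Set.Ioo (-1 : ℝ) 1) :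
    HasDerivAt (ofScalarsSum aC) (ofScalarsSum aCd x) x := by
  refine hasDerivAt_ofScalarsSum aC rad_aC (abs_lt_of_mem hx) ?_
  have := hasSum_ofScalars aCd rad_aCd (abs_lt_of_mem hx)
  exact this

lemma cCd_eq_vC (n : ℕ) : ((n : ℝ) + 1) * cC (n + 1) = vC n := by
  rcases Nat.even_or_odd n with he | ho
  · obtain ⟨j, hj⟩ := he
    have hj' : n = 2 * j := by omega
    subst hj'
    rw [show 2 * j + 1 = 2 * j + 1 from rfl, cC_odd j, vC_even j]
    have h : (2 * (j : ℝ) + 1) ≠ 0 := by positivity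
    push_cast
    field_simp
  · obtain ⟨j, hj⟩ := ho
    subst hj
    rw [show 2 * j + 1 + 1 = 2 * (j + 1) from by ring, cC_even (j + 1), vC_odd j]
    ring

lemma hasDerivAt_U {x : ℝ} (hx : x ∈ Set.Ioo (-1 : ℝ) 1) :
    HasDerivAt (ofScalarsSum cC) (ofScalarsSum vC x) x := by
  refine hasDerivAt_ofScalarsSum cC rad_cC (abs_lt_of_mem hx) ?_
  have h := hasSum_ofScalars vC rad_vC (abs_lt_of_mem hx)
  have heq : (fun n : ℕ => ((n : ℝ) + 1) * cC (n + 1) * x ^ n) = fun n : ℕ => vC n * x ^ n := by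
    funext n
    rw [cCd_eq_vC n]
  rw [heq]
  exact h

lemma V_eq {x : ℝ} (hx : x ∈ Set.Ioo (-1 : ℝ) 1) :
    ofScalarsSum vC x * Real.sqrt (1 - x ^ 2) = 1 := by
  have hder : ∀ y ∈ Set.Ioo (-1 : ℝ) 1,
      HasDerivAt (fun z => ofScalarsSum vC z * Real.sqrt (1 - z ^ 2)) 0 y := by
    intro y hy
    have h1 := (hasDerivAt_V hy).mul (hasDerivAt_sqrt_one_sub_sq hy)
    have hq := sqrt_pos' hy
    have hq2 := sq_sqrt' hy
    have key : ofScalarsSum vCd y * Real.sqrt (1 - y ^ 2)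
        + ofScalarsSum vC y * (-y / Real.sqrt (1 - y ^ 2))
        = ((1 - y ^ 2) * ofScalarsSum vCd y - y * ofScalarsSum vC y)
          / Real.sqrt (1 - y ^ 2) := by
      rw [← hq2]
      field_simp
      rw [Real.sqrt_sq hq.le]
      ring
    rw [key, EV (abs_lt_of_mem hy), zero_div] at h1
    exact h1
  have := const_on_Ioo hder hx
  rw [this]
  norm_num [ofScalarsSum_zero]
  have : vC 0 = vSeq 0 := by simpa using vC_even 0
  rw [this, vSeq_zero]

lemma U_eq {x : ℝ} (hx : x ∈ Set.Ioo (-1 : ℝ) 1) :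
    ofScalarsSum cC x = Real.arcsin x := by
  have hder : ∀ y ∈ Set.Ioo (-1 : ℝ) 1,
      HasDerivAt (fun z => ofScalarsSum cC z - Real.arcsin z) 0 y := by
    intro y hy
    have harc := Real.hasDerivAt_arcsin (ne_of_gt hy.1) (ne_of_lt hy.2)
    have h1 := (hasDerivAt_U hy).sub harc
    have hq := sqrt_pos' hy
    have hV : ofScalarsSum vC y = 1 / Real.sqrt (1 - y ^ 2) := by
      rw [eq_div_iff (ne_of_gt hq)]
      exact V_eq hy
    rw [hV] at h1
    simp at h1
    exact h1
  have := const_on_Ioo hder hx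
  have h0 : ofScalarsSum cC 0 - Real.arcsin 0 = 0 := by
    norm_num [ofScalarsSum_zero]
    simpa using cC_even 0
  rw [h0] at this
  linarith [this, sub_eq_zero.mp this]

lemma Y_eq {x : ℝ} (hx : x ∈ Set.Ioo (-1 : ℝ) 1) :
    ofScalarsSum aC x = Real.arcsin x ^ 2 / Real.sqrt (1 - x ^ 2) := by
  have hder : ∀ y ∈ Set.Ioo (-1 : ℝ) 1,
      HasDerivAt (fun z => ofScalarsSum aC z * Real.sqrt (1 - z ^ 2) - Real.arcsin z ^ 2) 0 y := by
    intro y hy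
    have harc := Real.hasDerivAt_arcsin (ne_of_gt hy.1) (ne_of_lt hy.2)
    have h2 := harc.pow 2
    have h1 := ((hasDerivAt_Y hy).mul (hasDerivAt_sqrt_one_sub_sq hy)).sub h2
    have hq := sqrt_pos' hy
    have hq2 := sq_sqrt' hy
    have hU := U_eq hy
    have key : ofScalarsSum aCd y * Real.sqrt (1 - y ^ 2)
        + ofScalarsSum aC y * (-y / Real.sqrt (1 - y ^ 2))
        - (2 : ℕ) * Real.arcsin y ^ (2 - 1) * (1 / Real.sqrt (1 - y ^ 2))
        = ((1 - y ^ 2) * ofScalarsSum aCd y - y * ofScalarsSum aC y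
            - 2 * ofScalarsSum cC y) / Real.sqrt (1 - y ^ 2) := by
      rw [← hU]
      rw [show ((1 : ℝ) - y ^ 2) = Real.sqrt (1 - y ^ 2) ^ 2 from hq2.symm]
      push_cast
      field_simp
      rw [Real.sqrt_sq hq.le]
      ring
    rw [key] at h1
    have hE := E2 (abs_lt_of_mem hy)
    have hnum : (1 - y ^ 2) * ofScalarsSum aCd y - y * ofScalarsSum aC y
        - 2 * ofScalarsSum cC y = 0 := by linarith
    rw [hnum, zero_div] at h1
    exact h1
  have hc := const_on_Ioo hder hx
  have h0 : ofScalarsSum aC 0 * Real.sqrt (1 - 0 ^ 2) - Real.arcsin 0 ^ 2 = 0 := by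
    norm_num [ofScalarsSum_zero, aC_zero]
  rw [h0] at hc
  have hq := sqrt_pos' hx
  rw [eq_div_iff (ne_of_gt hq)]
  linarith [sub_eq_zero.mp hc]

end A16

theorem arcsine_identity_16 (x : ℝ) (hx : |x| < 1) :
    HasSum (fun n : ℕ =>
        2 * (Nat.doubleFactorial (2 * n + 1) : ℝ) ^ 2 *
          (∑ k ∈ Finset.range (n + 1), 1 / (2 * (k : ℝ) + 1) ^ 2) *
          x ^ (2 * n + 2) / (Nat.factorial (2 * n + 2) : ℝ))
      ((Real.arcsin x) ^ 2 / Real.sqrt (1 - x ^ 2)) := by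
  have hmem : x ∈ Set.Ioo (-1 : ℝ) 1 := by
    obtain ⟨a, b⟩ := abs_lt.mp hx
    exact ⟨a, b⟩
  have h := A16.hasSum_ofScalars A16.aC A16.rad_aC hx
  rw [A16.Y_eq hmem] at h
  have hi : Function.Injective (fun n : ℕ => 2 * n + 2) := by
    intro a b hab
    simp only at hab
    omega
  have hzero : ∀ m, m ∉ Set.range (fun n : ℕ => 2 * n + 2) → A16.aC m * x ^ m = 0 := by
    intro m hm
    have hz : A16.aC m = 0 := by
      rw [A16.aC]
      split
      · rfl
      split
      · rename_i h0 heven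
        exfalso
        apply hm
        obtain ⟨j, hj⟩ := heven
        exact ⟨(m - 2) / 2, by simp only; omega⟩
      · rfl
    rw [hz, zero_mul]
  have h2 := (Function.Injective.hasSum_iff hi hzero).mpr h
  have heq : ((fun m : ℕ => A16.aC m * x ^ m) ∘ (fun n : ℕ => 2 * n + 2))
      = (fun n : ℕ =>
        2 * (Nat.doubleFactorial (2 * n + 1) : ℝ) ^ 2 *
          (∑ k ∈ Finset.range (n + 1), 1 / (2 * (k : ℝ) + 1) ^ 2) *
          x ^ (2 * n + 2) / (Nat.factorial (2 * n + 2) : ℝ)) := by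
    funext n
    simp only [Function.comp]
    rw [A16.aC_even n, A16.aSeq, A16.sSum]
    ring
  rw [heq] at h2
  exact h2
end
end

section
/- For all real x with 0 < |x| < 1/2, arcsin(2x)/(2x) · 1/√(1−4x²) = ∑_{n=0}^{∞} (16^n·(n!)²/(2n+1)!) · x^(2n). -/
open Real MeasureTheory intervalIntegral

noncomputable def cc (n : ℕ) : ℝ := 4 ^ n * (Nat.factorial n : ℝ) ^ 2 / (Nat.factorial (2 * n + 1) : ℝ)

lemma wallis (n : ℕ) : ∫ t in (0:ℝ)..1, (1 - t ^ 2) ^ n = cc n := by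
  induction n with
  | zero => simp [cc]
  | succ n ih =>
    have cont : ∀ m : ℕ, Continuous fun t : ℝ => (1 - t ^ 2) ^ m := by
      intro m; fun_prop
    have key : ∫ t in (0:ℝ)..1,
        ((2*(n:ℝ)+3) * (1 - t ^ 2) ^ (n+1) - (2*(n:ℝ)+2) * (1 - t ^ 2) ^ n) = 0 := by
      have hderiv : ∀ t ∈ Set.uIcc (0:ℝ) 1, HasDerivAt (fun t : ℝ => t * (1 - t ^ 2) ^ (n+1))
          ((2*(n:ℝ)+3) * (1 - t ^ 2) ^ (n+1) - (2*(n:ℝ)+2) * (1 - t ^ 2) ^ n) t := by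
        intro t _
        have h1 : HasDerivAt (fun t : ℝ => (1 - t ^ 2)) (-(2*t)) t := by
          simpa using ((hasDerivAt_pow 2 t).const_sub 1)
        have h2 := (hasDerivAt_id t).mul (h1.pow (n+1))
        refine h2.congr_deriv ?_
        simp only [Nat.add_sub_cancel, id_eq, Pi.pow_apply]
        push_cast
        ring
      have hint : IntervalIntegrable
          (fun t : ℝ => (2*(n:ℝ)+3) * (1 - t ^ 2) ^ (n+1) - (2*(n:ℝ)+2) * (1 - t ^ 2) ^ n)
          volume 0 1 := by
        apply Continuous.intervalIntegrable; fun_prop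
      have := intervalIntegral.integral_eq_sub_of_hasDerivAt hderiv hint
      simpa using this
    have split : ∫ t in (0:ℝ)..1,
        ((2*(n:ℝ)+3) * (1 - t ^ 2) ^ (n+1) - (2*(n:ℝ)+2) * (1 - t ^ 2) ^ n)
        = (2*(n:ℝ)+3) * (∫ t in (0:ℝ)..1, (1 - t ^ 2) ^ (n+1))
          - (2*(n:ℝ)+2) * ∫ t in (0:ℝ)..1, (1 - t ^ 2) ^ n := by
      rw [intervalIntegral.integral_sub ((by fun_prop : Continuous fun t : ℝ => (2*(n:ℝ)+3) * (1 - t ^ 2) ^ (n+1)).intervalIntegrable _ _)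
        ((by fun_prop : Continuous fun t : ℝ => (2*(n:ℝ)+2) * (1 - t ^ 2) ^ n).intervalIntegrable _ _),
        intervalIntegral.integral_const_mul, intervalIntegral.integral_const_mul]
    have h23 : (2*(n:ℝ)+3) ≠ 0 := by positivity
    have hrec : (2*(n:ℝ)+3) * cc (n+1) = (2*(n:ℝ)+2) * cc n := by
      unfold cc
      have hf : (Nat.factorial (2*(n+1)+1) : ℝ)
          = (2*(n:ℝ)+3) * ((2*(n:ℝ)+2) * (Nat.factorial (2*n+1) : ℝ)) := by
        have h : 2*(n+1)+1 = (2*n+1) + 1 + 1 := by ring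
        rw [h, Nat.factorial_succ, Nat.factorial_succ]
        push_cast; ring
      rw [hf, Nat.factorial_succ]
      have hne : (Nat.factorial (2*n+1) : ℝ) ≠ 0 := Nat.cast_ne_zero.mpr (Nat.factorial_ne_zero _)
      field_simp
      push_cast
      ring
    rw [split, ih] at key
    apply mul_left_cancel₀ h23
    rw [hrec]
    linarith


lemma main_series {y : ℝ} (hy : |y| < 1) :
    HasSum (fun n : ℕ => cc n * y ^ (2 * n + 1)) (Real.arcsin y / Real.sqrt (1 - y ^ 2)) := by
  have hy1 : y ^ 2 < 1 := by
    have := abs_lt.mp hy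
    nlinarith
  have hy0 : (0:ℝ) < 1 - y ^ 2 := by linarith
  set s : ℝ := Real.sqrt (1 - y ^ 2) with hs
  have hs0 : 0 < s := Real.sqrt_pos.mpr hy0
  have hs2 : s ^ 2 = 1 - y ^ 2 := Real.sq_sqrt hy0.le
  set F : ℕ → ℝ → ℝ := fun n t => y ^ (2 * n + 1) * (1 - t ^ 2) ^ n with hF
  have contF : ∀ n, Continuous (F n) := by intro n; fun_prop
  have hF_int : ∀ n, IntegrableOn (F n) (Set.Ioc (0:ℝ) 1) volume := fun n =>
    (contF n).integrableOn_Ioc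
  -- norm bound on Ioc 0 1
  have hbound : ∀ n, ∀ t ∈ Set.Ioc (0:ℝ) 1, ‖F n t‖ ≤ |y| ^ (2 * n + 1) := by
    intro n t ht
    have h1 : (0:ℝ) ≤ 1 - t ^ 2 := by nlinarith [ht.1, ht.2]
    have h2 : 1 - t ^ 2 ≤ 1 := by nlinarith [ht.1]
    have : ‖F n t‖ = |y| ^ (2 * n + 1) * (1 - t ^ 2) ^ n := by
      rw [hF]; rw [norm_mul, norm_pow, norm_pow, Real.norm_eq_abs, Real.norm_eq_abs,
        abs_of_nonneg h1]
    rw [this]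
    calc |y| ^ (2 * n + 1) * (1 - t ^ 2) ^ n ≤ |y| ^ (2 * n + 1) * 1 := by
          apply mul_le_mul_of_nonneg_left _ (by positivity)
          exact pow_le_one₀ h1 h2
      _ = |y| ^ (2 * n + 1) := by ring
  have hgeo : Summable fun n : ℕ => |y| ^ (2 * n + 1) := by
    have h2 : |y| ^ 2 < 1 := by nlinarith [abs_nonneg y]
    have := (summable_geometric_of_lt_one (by positivity) h2).mul_left |y|
    apply this.congr
    intro n
    rw [← pow_mul, ← pow_succ']
  have hF_sum : Summable fun n => ∫ t in Set.Ioc (0:ℝ) 1, ‖F n t‖ := by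
    apply Summable.of_nonneg_of_le (fun n => integral_nonneg fun t => norm_nonneg _) _ hgeo
    intro n
    calc ∫ t in Set.Ioc (0:ℝ) 1, ‖F n t‖
        ≤ |y| ^ (2 * n + 1) * (volume (Set.Ioc (0:ℝ) 1)).toReal := by
          rw [show (∫ t in Set.Ioc (0:ℝ) 1, ‖F n t‖) = ‖∫ t in Set.Ioc (0:ℝ) 1, ‖F n t‖‖ from
            (Real.norm_of_nonneg (integral_nonneg fun t => norm_nonneg _)).symm]
          apply norm_setIntegral_le_of_norm_le_const_ae' (by simp)
          filter_upwards with t ht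
          simpa using hbound n t ht
      _ = |y| ^ (2 * n + 1) := by simp
  have hsum := MeasureTheory.hasSum_integral_of_summable_integral_norm
    (μ := volume.restrict (Set.Ioc (0:ℝ) 1)) hF_int hF_sum
  -- evaluate each term integral
  have hA : (fun n => ∫ t in Set.Ioc (0:ℝ) 1, F n t) = fun n => cc n * y ^ (2 * n + 1) := by
    funext n
    rw [← intervalIntegral.integral_of_le (by norm_num : (0:ℝ) ≤ 1)]
    rw [hF]
    rw [intervalIntegral.integral_const_mul, wallis n]
    ring
  -- evaluate the integral of the tsum
  have hB : ∫ t in Set.Ioc (0:ℝ) 1, (∑' n, F n t) = Real.arcsin y / s := by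
    have hptw : ∀ t ∈ Set.Ioc (0:ℝ) 1, (∑' n, F n t) = y / (1 - y ^ 2 + y ^ 2 * t ^ 2) := by
      intro t ht
      have h1 : (0:ℝ) ≤ 1 - t ^ 2 := by nlinarith [ht.1, ht.2]
      have h2 : 1 - t ^ 2 ≤ 1 := by nlinarith [ht.1]
      have hr0 : (0:ℝ) ≤ y ^ 2 * (1 - t ^ 2) := by positivity
      have hr1 : y ^ 2 * (1 - t ^ 2) < 1 := by nlinarith
      have hcong : ∀ n : ℕ, F n t = y * (y ^ 2 * (1 - t ^ 2)) ^ n := by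
        intro n; rw [hF, mul_pow, ← pow_mul]; ring
      calc (∑' n, F n t) = ∑' n, y * (y ^ 2 * (1 - t ^ 2)) ^ n := by
            exact tsum_congr hcong
        _ = y * (1 - y ^ 2 * (1 - t ^ 2))⁻¹ := by
            rw [tsum_mul_left, tsum_geometric_of_lt_one hr0 hr1]
        _ = y / (1 - y ^ 2 + y ^ 2 * t ^ 2) := by
            rw [div_eq_mul_inv]; ring_nf
    rw [setIntegral_congr_fun measurableSet_Ioc hptw,
      ← intervalIntegral.integral_of_le (by norm_num : (0:ℝ) ≤ 1)]
    have hden : ∀ t : ℝ, 1 - y ^ 2 + y ^ 2 * t ^ 2 ≠ 0 := by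
      intro t; positivity
    have hderiv : ∀ t ∈ Set.uIcc (0:ℝ) 1,
        HasDerivAt (fun t : ℝ => (1/s) * Real.arctan (y / s * t))
          (y / (1 - y ^ 2 + y ^ 2 * t ^ 2)) t := by
      intro t _
      have h1 : HasDerivAt (fun t : ℝ => y / s * t) (y / s) t := by
        simpa using (hasDerivAt_id t).const_mul (y / s)
      have h2 := (Real.hasDerivAt_arctan (y / s * t)).comp t h1
      have h3 := h2.const_mul (1/s)
      refine h3.congr_deriv ?_
      have h4 : 1 + (y / s * t) ^ 2 = (1 - y ^ 2 + y ^ 2 * t ^ 2) / s ^ 2 := by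
        field_simp
        rw [hs2]
      rw [h4]
      field_simp
    have hcont : IntervalIntegrable (fun t : ℝ => y / (1 - y ^ 2 + y ^ 2 * t ^ 2)) volume 0 1 := by
      apply Continuous.intervalIntegrable
      exact continuous_const.div (by fun_prop) hden
    rw [intervalIntegral.integral_eq_sub_of_hasDerivAt hderiv hcont]
    have hmem : y ∈ Set.Ioo (-(1:ℝ)) 1 := ⟨(abs_lt.mp hy).1, (abs_lt.mp hy).2⟩
    simp only [mul_one, mul_zero, Real.arctan_zero, sub_zero]
    rw [Real.arcsin_eq_arctan hmem, ← hs]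
    ring
  rw [hB] at hsum
  rwa [show (∫ t in Set.Ioc (0:ℝ) 1, F · t) = fun n => cc n * y ^ (2 * n + 1) from hA] at hsum

theorem arcsine_identity_18 (x : ℝ) (hx0 : 0 < |x|) (hx : |x| < 1 / 2) :
    HasSum (fun n : ℕ =>
        (16 ^ n * ((Nat.factorial n : ℝ)) ^ 2 / (Nat.factorial (2 * n + 1) : ℝ)) * x ^ (2 * n))
      (Real.arcsin (2 * x) / (2 * x) * (1 / Real.sqrt (1 - 4 * x ^ 2))) := by
  have hx2 : (2:ℝ) * x ≠ 0 := by
    intro h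
    rw [show x = 0 from by linarith] at hx0
    simp at hx0
  have hy : |2 * x| < 1 := by
    rw [abs_mul]
    rw [abs_of_nonneg (by norm_num : (0:ℝ) ≤ 2)]
    linarith
  have h := (main_series hy).div_const (2 * x)
  have hsq : (2 * x) ^ 2 = 4 * x ^ 2 := by ring
  rw [hsq] at h
  have hfun : (fun n : ℕ => cc n * (2 * x) ^ (2 * n + 1) / (2 * x))
      = fun n : ℕ =>
        (16 ^ n * ((Nat.factorial n : ℝ)) ^ 2 / (Nat.factorial (2 * n + 1) : ℝ)) * x ^ (2 * n) := by
    funext n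
    have hp : (2 * x) ^ (2 * n + 1) = 2 * x * (4 ^ n * x ^ (2 * n)) := by
      rw [pow_succ, pow_mul, show (2 * x) ^ 2 = 4 * x ^ 2 from by ring, mul_pow, pow_mul]
      ring
    rw [hp, cc]
    have h16 : (16:ℝ) ^ n = 4 ^ n * 4 ^ n := by rw [← mul_pow]; norm_num
    have hx1 : x ≠ 0 := by rintro rfl; simp at hx2
    field_simp
    rw [h16]
    ring
  rw [hfun] at h
  refine (congrArg (HasSum _) ?_).mp h
  ring
end

section
/- For every integer n ≥ 0, ∑_{k=0}^{n} ((k+1)(n-k+1)/(2k+1)) · Catalan(k) · Catalan(n−k) = 16^n / ((2n+1)(n+1)·Catalan(n)), where Catalan(k) = C(2k,k)/(k+1). -/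
open Finset

private lemma cb_succ (m : ℕ) :
    ((m : ℚ) + 1) * (Nat.centralBinom (m + 1) : ℚ)
      = 2 * (2 * (m : ℚ) + 1) * (Nat.centralBinom m : ℚ) := by
  exact_mod_cast congrArg (fun x : ℕ => (x : ℚ)) (Nat.succ_mul_centralBinom_succ m)

private lemma cat_cb (m : ℕ) :
    ((m : ℚ) + 1) * (catalan m : ℚ) = (Nat.centralBinom m : ℚ) := by
  exact_mod_cast congrArg (fun x : ℕ => (x : ℚ)) (succ_mul_catalan_eq_centralBinom m)

private lemma cb_ne (m : ℕ) : (Nat.centralBinom m : ℚ) ≠ 0 := by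
  exact_mod_cast (Nat.centralBinom_pos m).ne'

private lemma key (n : ℕ) :
    ∑ k ∈ range (n + 1),
      (Nat.centralBinom k : ℚ) * (Nat.centralBinom (n - k) : ℚ) / (2 * (k : ℚ) + 1)
      = 16 ^ n / ((2 * (n : ℚ) + 1) * (Nat.centralBinom n : ℚ)) := by
  induction n with
  | zero => simp [Nat.centralBinom_zero]
  | succ n ih =>
    set b : ℕ → ℚ := fun m => (Nat.centralBinom m : ℚ) with hb
    set h : ℕ → ℚ := fun k =>
      2 * k * (2 * (k : ℚ) - 2 * n - 1) * b k * (catalan (n - k) : ℚ)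
        / (((n : ℚ) + 1) * (2 * (n : ℚ) + 3)) with hh
    have hstep : ∀ k ∈ range n,
        b k * b (n + 1 - k) / (2 * (k : ℚ) + 1)
          = 8 * ((n : ℚ) + 1) / (2 * (n : ℚ) + 3) * (b k * b (n - k) / (2 * (k : ℚ) + 1))
            + (h (k + 1) - h k) := by
      intro k hk
      rw [mem_range] at hk
      obtain ⟨m, rfl⟩ : ∃ m, n = k + 1 + m := ⟨n - k - 1, by omega⟩
      have e1 : k + 1 + m + 1 - k = m + 2 := by omega
      have e2 : k + 1 + m - k = m + 1 := by omega
      have e3 : k + 1 + m - (k + 1) = m := by omega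
      simp only [hh, hb]
      rw [e1, e2, e3]
      have hm1 : ((m : ℚ) + 1) ≠ 0 := by positivity
      have hm2 : ((m : ℚ) + 2) ≠ 0 := by positivity
      have hk1 : ((k : ℚ) + 1) ≠ 0 := by positivity
      have fbm2 : (Nat.centralBinom (m + 2) : ℚ)
          = 2 * (2 * (m : ℚ) + 3) * (Nat.centralBinom (m + 1) : ℚ) / ((m : ℚ) + 2) := by
        rw [eq_div_iff hm2]
        have := cb_succ (m + 1); push_cast at this ⊢; linarith
      have fbk1 : (Nat.centralBinom (k + 1) : ℚ)
          = 2 * (2 * (k : ℚ) + 1) * (Nat.centralBinom k : ℚ) / ((k : ℚ) + 1) := by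
        rw [eq_div_iff hk1]; have := cb_succ k; linarith
      have fum1 : (catalan (m + 1) : ℚ) = (Nat.centralBinom (m + 1) : ℚ) / ((m : ℚ) + 2) := by
        rw [eq_div_iff hm2]
        have := cat_cb (m + 1); push_cast at this ⊢; linarith
      have fum : (catalan m : ℚ) = (Nat.centralBinom m : ℚ) / ((m : ℚ) + 1) := by
        rw [eq_div_iff hm1]; have := cat_cb m; linarith
      have fbm1 : (Nat.centralBinom (m + 1) : ℚ)
          = 2 * (2 * (m : ℚ) + 1) * (Nat.centralBinom m : ℚ) / ((m : ℚ) + 1) := by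
        rw [eq_div_iff hm1]; have := cb_succ m; linarith
      rw [fbm2, fum1, fbk1, fum, fbm1]
      have h2k : (2 * (k : ℚ) + 1) ≠ 0 := by positivity
      have hd1 : ((k : ℚ) + 1 + m + 1) ≠ 0 := by positivity
      have hd2 : (2 * ((k : ℚ) + 1 + m) + 3) ≠ 0 := by positivity
      push_cast
      field_simp
      ring
    rw [sum_range_succ, sum_range_succ, Finset.sum_congr rfl hstep,
      Finset.sum_add_distrib, ← Finset.mul_sum, Finset.sum_range_sub h]
    have ih' : ∑ k ∈ range n, b k * b (n - k) / (2 * (k : ℚ) + 1)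
        = 16 ^ n / ((2 * (n : ℚ) + 1) * b n) - b n * b (n - n) / (2 * (n : ℚ) + 1) := by
      rw [eq_sub_iff_add_eq, ← sum_range_succ]; exact ih
    rw [ih']
    have en : n - n = 0 := Nat.sub_self n
    have en1 : n + 1 - n = 1 := by omega
    have en2 : n + 1 - (n + 1) = 0 := by omega
    rw [en, en1, en2]
    simp only [hh, hb, Nat.centralBinom_zero, Nat.cast_one, Nat.sub_self, catalan_zero]
    have cb1 : Nat.centralBinom 1 = 2 := by decide
    rw [cb1]
    have hbn1 : (Nat.centralBinom (n + 1) : ℚ)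
        = 2 * (2 * (n : ℚ) + 1) * (Nat.centralBinom n : ℚ) / ((n : ℚ) + 1) := by
      rw [eq_div_iff (by positivity : ((n : ℚ) + 1) ≠ 0)]
      have := cb_succ n; linarith
    rw [hbn1]
    have h2n1 : (2 * (n : ℚ) + 1) ≠ 0 := by positivity
    have h2n3 : (2 * (n : ℚ) + 3) ≠ 0 := by positivity
    have hn1 : ((n : ℚ) + 1) ≠ 0 := by positivity
    have hbne := cb_ne n
    push_cast
    field_simp
    ring

theorem arcsine_identity_19 (n : ℕ) :
    ∑ k ∈ Finset.range (n + 1),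
      (((k : ℚ) + 1) * ((n : ℚ) - k + 1) / (2 * (k : ℚ) + 1)) *
        (catalan k : ℚ) * (catalan (n - k) : ℚ) =
    (16 : ℚ) ^ n / ((2 * (n : ℚ) + 1) * ((n : ℚ) + 1) * (catalan n : ℚ)) := by
  have hterm : ∀ k ∈ range (n + 1),
      (((k : ℚ) + 1) * ((n : ℚ) - k + 1) / (2 * (k : ℚ) + 1)) *
        (catalan k : ℚ) * (catalan (n - k) : ℚ)
      = (Nat.centralBinom k : ℚ) * (Nat.centralBinom (n - k) : ℚ) / (2 * (k : ℚ) + 1) := by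
    intro k hk
    rw [mem_range] at hk
    have hkn : k ≤ n := by omega
    have hcast : (n : ℚ) - k + 1 = ((n - k : ℕ) : ℚ) + 1 := by
      push_cast [hkn]; ring
    rw [hcast, ← cat_cb k, ← cat_cb (n - k)]
    ring
  rw [Finset.sum_congr rfl hterm, key n, mul_assoc, cat_cb n]
end
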